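/- Let f : ℕ → [3,∞) be a non-decreasing function with lim_{r→∞} f(r) = ∞. Suppose G is a finite graph and ≺ is a linear order on V(G) such that col_{≺,r}(G) ≤ f(r) for every non-negative integer r. Then there exists l₀ such that for every positive integer N and every integer l ≥ l₀, the ordering ≺ can be extended to a linear order ≺' on V(G⁺(N,l)) such that col_{≺',r}(G⁺(N,l)) ≤ f(r) for every non-negative integer r. -/

import Mathlib

open MeasureTheory Set Pointwise Metric Function
open scoped RealInnerProductSpace ENNReal

noncomputable section

/-- `ℝ^d` as a Euclidean space. -/
abbrev Euc (d : ℕ) := EuclideanSpace ℝ (Fin d)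

/-- A shape: a compact set that is non-degenerate, i.e. not contained in a proper
affine subspace. -/
def IsShape {d : ℕ} (B : Set (Euc d)) : Prop :=
  IsCompact B ∧ affineSpan ℝ B = ⊤

/-- `B₁ ⊑ₛ B₂`: for every `x ∈ B₂` there is a translate `B₁'` of `B₁` with `x ∈ B₁'`
and `vol (B₁' ∩ B₂) ≥ vol B₁ / s`. -/
def SqIn {d : ℕ} (s : ℝ) (B₁ B₂ : Set (Euc d)) : Prop :=
  ∀ x ∈ B₂, ∃ v : Euc d, x ∈ v +ᵥ B₁ ∧
    volume B₁ / ENNReal.ofReal s ≤ volume ((v +ᵥ B₁) ∩ B₂)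

/-- `B₁` and `B₂` are `⊑ₛ`-comparable. -/
def SqComparable {d : ℕ} (s : ℝ) (B₁ B₂ : Set (Euc d)) : Prop :=
  SqIn s B₁ B₂ ∨ SqIn s B₂ B₁

/-- `B₁ ≤ₖ B₂`: some translate of `B₁` is contained in `k • B₂`. -/
def LeK {d : ℕ} (k : ℝ) (B₁ B₂ : Set (Euc d)) : Prop :=
  ∃ v : Euc d, v +ᵥ B₁ ⊆ k • B₂

/-- `B₁ ≤_{k,s} B₂`: for every `x ∈ k • B₂` there are a translate `B₁'` of `B₁` and a
translate `B₁''` of `s • B₁` with `x ∈ B₁''` and `B₁' ⊆ B₁'' ∩ k • B₂`. -/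
def LeKS {d : ℕ} (k s : ℝ) (B₁ B₂ : Set (Euc d)) : Prop :=
  ∀ x ∈ k • B₂, ∃ v w : Euc d,
    x ∈ w +ᵥ (s • B₁) ∧ v +ᵥ B₁ ⊆ (w +ᵥ (s • B₁)) ∩ (k • B₂)

/-- An intersection representation of a graph in `ℝ^d`. -/
def IsIntersectionRep {V : Type*} {d : ℕ} (G : SimpleGraph V) (φ : V → Set (Euc d)) : Prop :=
  (∀ v, (φ v).Nonempty) ∧ ∀ u v : V, u ≠ v → ((φ u ∩ φ v).Nonempty ↔ G.Adj u v)

/-- A representation is `c`-thin if every point lies in at most `c` of the sets. -/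
def IsThin {V : Type*} {d : ℕ} (c : ℝ) (φ : V → Set (Euc d)) : Prop :=
  ∀ x : Euc d, ({v : V | x ∈ φ v}.ncard : ℝ) ≤ c

/-- A `(c,⊑ₛ)`-tame representation. -/
def IsTame {V : Type*} {d : ℕ} (c s : ℝ) (G : SimpleGraph V) (φ : V → Set (Euc d)) : Prop :=
  IsIntersectionRep G φ ∧ IsThin c φ ∧
    (∀ v, Convex ℝ (φ v) ∧ IsShape (φ v)) ∧
    ∀ u v : V, SqComparable s (φ u) (φ v)

/-- An `S`-shaped representation: each vertex is assigned a translate of a shape in `S`. -/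
def IsSShaped {V : Type*} {d : ℕ} (S : Set (Set (Euc d))) (φ : V → Set (Euc d)) : Prop :=
  ∀ v, ∃ B ∈ S, ∃ t : Euc d, φ v = t +ᵥ B

/-- `X` is a balanced separator: every component of `G - X` has at most `(2/3)|V(G)|`
vertices. -/
def IsBalancedSeparator {V : Type*} [Fintype V] (G : SimpleGraph V) (X : Set V) : Prop :=
  ∀ C : (G.induce Xᶜ).ConnectedComponent,
    (C.supp.ncard : ℝ) ≤ 2 / 3 * Fintype.card V

/-- `L_{G,≺,r}(v)`, where the linear ordering `≺` is encoded by an injective `ρ : V → ℕ`: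
the set of vertices `x ⪯ v` reachable from `v` by a path of length at most `r` all of whose
internal vertices are `≻ v`. -/
def Lset {V : Type*} (G : SimpleGraph V) (ρ : V → ℕ) (r : ℕ) (v : V) : Set V :=
  {x | ρ x ≤ ρ v ∧ ∃ p : G.Walk v x, p.IsPath ∧ p.length ≤ r ∧
    ∀ z ∈ p.support, z ≠ v → z ≠ x → ρ v < ρ z}

/-- The height of a set: the least `h ≥ 0` such that the set lies between two parallel
hyperplanes at distance `h`. -/
def heightOf {d : ℕ} (B : Set (Euc d)) : ℝ :=
  sInf {h : ℝ | 0 ≤ h ∧ ∃ u : Euc d, ‖u‖ = 1 ∧ ∃ a : ℝ,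
    ∀ x ∈ B, a ≤ (inner ℝ u x : ℝ) ∧ (inner ℝ u x : ℝ) ≤ a + h}

/-- A parallelepiped with center `p` and sides `v₁, …, v_d`. -/
def IsParallelepiped {d : ℕ} (T : Set (Euc d)) : Prop :=
  ∃ (p : Euc d) (v : Fin d → Euc d), LinearIndependent ℝ v ∧
    T = {x | ∃ α : Fin d → ℝ, (∀ i, α i ∈ Set.Icc (-1 : ℝ) 1) ∧ x = p + ∑ i, α i • v i}

/-- `T` is an envelope of `B`: a parallelepiped of smallest volume containing `B`. -/
def IsEnvelope {d : ℕ} (T B : Set (Euc d)) : Prop :=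
  IsParallelepiped T ∧ B ⊆ T ∧
    ∀ T' : Set (Euc d), IsParallelepiped T' → B ⊆ T' → volume T ≤ volume T'

/-- A box in `ℝ^d`: a product of `d` closed intervals. -/
def IsBox {d : ℕ} (B : Set (Euc d)) : Prop :=
  ∃ a b : Fin d → ℝ, B = {x : Euc d | ∀ i, x i ∈ Set.Icc (a i) (b i)}

/-- `Q` is `k'`-fat: every ball `B` centered in `Q` satisfies
`vol (B ∩ Q) ≥ min (vol B / k') (vol Q)`. -/
def IsFat {d : ℕ} (k' : ℝ) (Q : Set (Euc d)) : Prop :=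
  ∀ x ∈ Q, ∀ ρ : ℝ, 0 < ρ →
    min (volume (Metric.closedBall x ρ) / ENNReal.ofReal k') (volume Q)
      ≤ volume (Metric.closedBall x ρ ∩ Q)

/-- The strong product of two simple graphs. -/
def strongProd {α β : Type*} (G : SimpleGraph α) (H : SimpleGraph β) :
    SimpleGraph (α × β) where
  Adj x y := x ≠ y ∧ (x.1 = y.1 ∨ G.Adj x.1 y.1) ∧ (x.2 = y.2 ∨ H.Adj x.2 y.2)
  symm := by
    constructor
    rintro ⟨a1, a2⟩ ⟨b1, b2⟩ ⟨hne, h1, h2⟩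
    refine ⟨hne.symm, ?_, ?_⟩
    · rcases h1 with h | h
      · exact Or.inl h.symm
      · exact Or.inr h.symm
    · rcases h2 with h | h
      · exact Or.inl h.symm
      · exact Or.inr h.symm
  loopless := by
    constructor
    rintro ⟨a1, a2⟩ ⟨hne, -, -⟩
    exact hne rfl

/-- The graph `G⁺(N, l)`: add hubs `v₁, …, v_N` and internally disjoint paths of length `l`
from each hub to each vertex of `G`.  The internal vertices of the path from hub `i` to
vertex `u` are `(i, u, 0), …, (i, u, l-2)`. -/
def plusGraph {V : Type*} (G : SimpleGraph V) (N l : ℕ) :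
    SimpleGraph (V ⊕ (Fin N ⊕ Fin N × V × Fin (l - 1))) :=
  SimpleGraph.fromRel (fun x y =>
    match x, y with
    | Sum.inl u, Sum.inl w => G.Adj u w
    | Sum.inr (Sum.inl _), Sum.inl _ => l = 1
    | Sum.inr (Sum.inl i), Sum.inr (Sum.inr (j, _, t)) => i = j ∧ (t : ℕ) = 0
    | Sum.inr (Sum.inr (i, u, t)), Sum.inr (Sum.inr (j, w, t')) =>
        i = j ∧ u = w ∧ (t' : ℕ) = (t : ℕ) + 1
    | Sum.inr (Sum.inr (_, u, t)), Sum.inl w => u = w ∧ (t : ℕ) = l - 2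
    | _, _ => False)

/-- `γ_d`: the supremum over affine hyperplanes `H` of the `(d-1)`-dimensional Hausdorff
measure of the intersection of `H` with the unit cube. -/
def gammaConst (d : ℕ) : ℝ :=
  sSup {γ : ℝ | ∃ (u : Euc d) (a : ℝ), ‖u‖ = 1 ∧
    γ = (MeasureTheory.Measure.hausdorffMeasure ((d : ℝ) - 1)
      ({x : Euc d | (inner ℝ u x : ℝ) = a} ∩ {x : Euc d | ∀ i, x i ∈ Set.Icc (0 : ℝ) 1})).toReal}

/-- The sequence `ℓ_h`: `ℓ_1 = 1` and `ℓ_{h+1} = ℓ_h / (2(h+1))`. -/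
def ellSeq : ℕ → ℝ
  | 0 => 2
  | n + 1 => ellSeq n / (2 * (n + 1))

/-- The trapezoid `T_h` with vertices `(0,0)`, `(ℓ_h,0)`, `(ℓ_h, hℓ_h)`, `(0, 2hℓ_h)`. -/
def trapezoidShape (h : ℕ) : Set (Euc 2) :=
  convexHull ℝ {(WithLp.toLp 2 ![0, 0] : Euc 2), WithLp.toLp 2 ![ellSeq h, 0], WithLp.toLp 2 ![ellSeq h, h * ellSeq h],
    WithLp.toLp 2 ![0, 2 * h * ellSeq h]}

/-- An axis-aligned square `S_h` with sides of length `ℓ_h`. -/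
def squareShape (h : ℕ) : Set (Euc 2) :=
  {x : Euc 2 | x 0 ∈ Set.Icc 0 (ellSeq h) ∧ x 1 ∈ Set.Icc 0 (ellSeq h)}

/-- The set `S*` of shapes. -/
def SStar : Set (Set (Euc 2)) :=
  {B | ∃ h : ℕ, 0 < h ∧ (B = trapezoidShape h ∨ B = squareShape h)}

/-- A class of finite graphs is `⊑`-representable. -/
def SqRepresentable (𝒢 : ∀ V : Type, Fintype V → SimpleGraph V → Prop) : Prop :=
  ∃ d c s : ℕ, 0 < d ∧ 0 < c ∧ 0 < s ∧
    ∀ (V : Type) (instV : Fintype V) (G : SimpleGraph V), 𝒢 V instV G →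
      ∃ S : Set (Set (Euc d)), (∀ B ∈ S, Convex ℝ B ∧ IsShape B) ∧
        S.Pairwise (SqComparable (s : ℝ)) ∧
        ∃ φ : V → Set (Euc d), IsIntersectionRep G φ ∧ IsThin (c : ℝ) φ ∧ IsSShaped S φ

end

/-!
Extend `≺` by putting `V(G)` first, then the hubs, then the internal vertices of the paths
`P_{i,u}`, each path ordered so that its vertices come earlier the closer they are to `u`.
An internal vertex of `P_{i,u}` then weakly reaches only itself, `v_i` and its neighbour towards
`u`, hence at most `3 ≤ f r` vertices. A hub weakly reaches only itself, and vertices of `G` once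
`r ≥ l`. An old vertex weakly reaches only old vertices, and for `r < 2l` only along paths of `G`,
since any detour through the new part visits a hub and has length at least `2l`. Choosing
`l₀ ≥ 2` so that `f ≥ |V(G)| + 1` from `l₀` on settles every remaining case by the trivial bound.
-/

namespace SimpleGraph.Walk

variable {V W : Type*} {G : SimpleGraph V} {H : SimpleGraph W}

theorem le_add_length_of_adj {d : V → ℕ} (hd : ∀ x y, G.Adj x y → d x ≤ d y + 1) {x y : V}
    (p : G.Walk x y) : d x ≤ d y + p.length := by
  induction p with
  | nil => simp
  | cons h q ih => have := hd _ _ h; rw [length_cons]; omega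

theorem exists_mem_support_of_mem_of_notMem {C B : Set V}
    (hC : ∀ c ∈ C, ∀ y, G.Adj c y → y ∈ C ∨ y ∈ B) {x y : V} (p : G.Walk x y)
    (hx : x ∈ C) (hy : y ∉ C) : ∃ z ∈ p.support, z ∈ B := by
  obtain ⟨d, hd, hfst, hsnd⟩ := p.exists_boundary_dart C hx hy
  exact ⟨d.snd, p.dart_snd_mem_support_of_mem_darts hd, (hC _ hfst _ d.adj).resolve_left hsnd⟩

theorem exists_support_map_eq (φ : G ↪g H) {x y : W} (p : H.Walk x y)
    (hp : ∀ z ∈ p.support, z ∈ Set.range φ) {a b : V} (ha : φ a = x) (hb : φ b = y) :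
    ∃ q : G.Walk a b, q.support.map φ = p.support := by
  induction p generalizing a with
  | nil =>
    obtain rfl := φ.injective (ha.trans hb.symm)
    exact ⟨nil, by simp [ha]⟩
  | @cons _ v _ h p ih =>
    subst ha
    obtain ⟨c, rfl⟩ := hp v (by simp)
    obtain ⟨q, hq⟩ := ih (fun z hz => hp z (by simp [hz])) rfl hb
    exact ⟨cons (φ.map_adj_iff.mp h) q, by simp [hq]⟩

end SimpleGraph.Walk

open SimpleGraph in
theorem mem_Lset_comp_of_paths_subset_range {V W : Type*} {G : SimpleGraph V}
    {H : SimpleGraph W} (φ : G ↪g H) {ρ : W → ℕ} {r : ℕ} {a b : V}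
    (hb : φ b ∈ Lset H ρ r (φ a))
    (hpaths : ∀ p : H.Walk (φ a) (φ b), p.IsPath → p.length ≤ r →
      ∀ z ∈ p.support, z ∈ Set.range φ) :
    b ∈ Lset G (ρ ∘ φ) r a := by
  obtain ⟨hle, p, hp, hlen, hint⟩ := hb
  obtain ⟨q, hq⟩ := p.exists_support_map_eq φ (hpaths p hp hlen) rfl rfl
  have hqlen : q.length = p.length := by
    simpa [Walk.length_support] using congrArg List.length hq
  refine ⟨hle, q, ?_, hqlen ▸ hlen, fun z hz hza hzb => ?_⟩
  · exact Walk.isPath_def _ |>.mpr <| (hq ▸ hp.support_nodup).of_map φ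
  · exact hint (φ z) (hq ▸ List.mem_map_of_mem hz) (φ.injective.ne hza) (φ.injective.ne hzb)

namespace PlusGraph

open SimpleGraph

variable {V : Type*} {G : SimpleGraph V} {N l : ℕ}

abbrev Vert (V : Type*) (N l : ℕ) := V ⊕ (Fin N ⊕ Fin N × V × Fin (l - 1))

abbrev hub (i : Fin N) : Vert V N l := Sum.inr (Sum.inl i)

abbrev mid (i : Fin N) (u : V) (t : Fin (l - 1)) : Vert V N l := Sum.inr (Sum.inr (i, u, t))

theorem adj_inl_inl {u w : V} :
    (plusGraph G N l).Adj (Sum.inl u) (Sum.inl w) ↔ G.Adj u w := by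
  simp only [plusGraph, fromRel_adj, ne_eq, Sum.inl.injEq]
  exact ⟨fun ⟨_, h⟩ => h.elim id .symm, fun h => ⟨G.ne_of_adj h, .inl h⟩⟩

def inlEmbedding : G ↪g plusGraph G N l where
  toEmbedding := .inl
  map_rel_iff' := adj_inl_inl

theorem eq_mid_of_hub_adj (hl : 2 ≤ l) {i : Fin N} {y : Vert V N l}
    (h : (plusGraph G N l).Adj (hub i) y) : ∃ w t, y = mid i w t ∧ (t : ℕ) = 0 := by
  rcases y with w | j | ⟨j, w, t⟩ <;> simp [plusGraph] at h
  · omega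
  · exact ⟨w, t, by simp [h.1], h.2⟩

theorem eq_of_mid_adj {i : Fin N} {u : V} {t : Fin (l - 1)} {y : Vert V N l}
    (h : (plusGraph G N l).Adj (mid i u t) y) :
    y = hub i ∨ (y = Sum.inl u ∧ (t : ℕ) = l - 2) ∨
      ∃ s, y = mid i u s ∧ ((s : ℕ) = t + 1 ∨ (t : ℕ) = s + 1) := by
  rcases y with w | j | ⟨j, w, s⟩ <;> simp [plusGraph] at h
  · simp [h.1.symm, h.2]
  · simp [h.1]
  · obtain ⟨rfl, rfl, hs⟩ | ⟨rfl, rfl, hs⟩ := h.2 <;> simp [hs]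

/-- The distance from `V(G)` in `G⁺(N, l)`. -/
def depth : Vert V N l → ℕ
  | Sum.inl _ => 0
  | Sum.inr (Sum.inl _) => l
  | Sum.inr (Sum.inr (_, _, t)) => l - 1 - t

theorem depth_le_of_adj (hl : 2 ≤ l) {x y : Vert V N l} (h : (plusGraph G N l).Adj x y) :
    depth x ≤ depth y + 1 := by
  rcases x with u | i | ⟨i, u, t⟩
  · simp [depth]
  · obtain ⟨w, t, rfl, ht⟩ := eq_mid_of_hub_adj hl h
    simp only [depth]; omega
  · have := t.isLt
    rcases eq_of_mid_adj h with rfl | ⟨rfl, ht⟩ | ⟨s, rfl, hs⟩ <;>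
      simp only [depth] <;> omega

theorem le_length_of_walk_hub_inl (hl : 2 ≤ l) {i : Fin N} {u : V}
    (p : (plusGraph G N l).Walk (hub i) (Sum.inl u)) : l ≤ p.length := by
  simpa [depth] using p.le_add_length_of_adj fun _ _ => depth_le_of_adj hl

theorem adj_mem_range_mid {i : Fin N} {u : V} {c y : Vert V N l} (hc : c ∈ Set.range (mid i u))
    (h : (plusGraph G N l).Adj c y) :
    y ∈ Set.range (mid i u) ∨ y ∈ ({hub i, Sum.inl u} : Set (Vert V N l)) := by
  obtain ⟨t, rfl⟩ := hc
  rcases eq_of_mid_adj h with rfl | ⟨rfl, -⟩ | ⟨s, rfl, -⟩ <;> simp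

def next (i : Fin N) (u : V) (t : Fin (l - 1)) : Vert V N l :=
  if h : (t : ℕ) + 1 < l - 1 then mid i u ⟨t + 1, h⟩ else Sum.inl u

structure IsAdapted (ρ : Vert V N l → ℕ) : Prop where
  inl_lt_hub : ∀ u i, ρ (Sum.inl u) < ρ (hub i)
  hub_lt_mid : ∀ i j u t, ρ (hub i) < ρ (mid j u t)
  strictAnti_mid : ∀ i u, StrictAnti fun t => ρ (mid i u t)

variable {ρ : Vert V N l → ℕ} {r : ℕ}

theorem IsAdapted.inl_lt_mid (hρ : IsAdapted ρ) (u : V) (i : Fin N) (w : V) (t : Fin (l - 1)) :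
    ρ (Sum.inl u) < ρ (mid i w t) :=
  (hρ.inl_lt_hub u i).trans (hρ.hub_lt_mid i i w t)

theorem eq_hub_of_walk_mid (hρ : IsAdapted ρ) {i : Fin N} {u : V} {s t : Fin (l - 1)}
    (hst : s < t) {x : Vert V N l} (q : (plusGraph G N l).Walk (mid i u s) x)
    (ht : mid i u t ∉ q.support) (hx : ρ x ≤ ρ (mid i u t))
    (hint : ∀ z ∈ q.support, z ≠ x → ρ (mid i u t) < ρ z) : x = hub i := by
  set C : Set (Vert V N l) := mid i u '' Set.Iio t
  have hC : ∀ c ∈ C, ∀ y, (plusGraph G N l).Adj c y →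
      y ∈ C ∨ y ∈ ({hub i, mid i u t} : Set (Vert V N l)) := by
    rintro _ ⟨s', hs't, rfl⟩ y h
    have := t.isLt
    simp only [Set.mem_Iio, Fin.lt_def] at hs't
    rcases eq_of_mid_adj h with rfl | ⟨rfl, hs'⟩ | ⟨s'', rfl, hs''⟩
    · simp
    · omega
    · by_cases hs''t : s'' = t
      · simp [hs''t]
      · exact .inl ⟨s'', by rw [Set.mem_Iio, Fin.lt_def]; omega, rfl⟩
  have hxC : x ∉ C := by
    rintro ⟨s', hs't, rfl⟩
    exact (hρ.strictAnti_mid i u hs't).not_ge hx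
  obtain ⟨z, hzq, rfl | rfl⟩ := q.exists_mem_support_of_mem_of_notMem hC ⟨s, hst, rfl⟩ hxC
  · by_contra hzx
    exact (hint _ hzq (Ne.symm hzx)).not_gt (hρ.hub_lt_mid i i u t)
  · exact absurd hzq ht

theorem mem_Lset_mid (hρ : IsAdapted ρ) {i : Fin N} {u : V} {t : Fin (l - 1)} {x : Vert V N l}
    (hx : x ∈ Lset (plusGraph G N l) ρ r (mid i u t)) :
    x = mid i u t ∨ x = hub i ∨ x = next i u t := by
  obtain ⟨hle, p, hp, -, hint⟩ := hx
  cases p with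
  | nil => exact .inl rfl
  | @cons _ b _ h q =>
    have ht : mid i u t ∉ q.support := ((Walk.cons_isPath_iff h q).mp hp).2
    have := t.isLt
    by_cases hbx : b = x
    · subst hbx
      rcases eq_of_mid_adj h with rfl | ⟨rfl, ht⟩ | ⟨s, rfl, hs | hs⟩
      · exact .inr (.inl rfl)
      · exact .inr (.inr (by simp [next]; omega))
      · exact .inr (.inr (by simp [next, ← hs]))
      · exact absurd hle (hρ.strictAnti_mid i u (Fin.lt_def.mpr (by omega))).not_ge
    · have hb : ρ (mid i u t) < ρ b := hint b (by simp) h.ne.symm hbx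
      obtain ⟨s, rfl, hst⟩ : ∃ s, b = mid i u s ∧ s < t := by
        rcases eq_of_mid_adj h with rfl | ⟨rfl, -⟩ | ⟨s, rfl, hs | hs⟩
        · exact absurd hb (hρ.hub_lt_mid i i u t).not_gt
        · exact absurd hb (hρ.inl_lt_mid u i u t).not_gt
        · exact absurd hb (hρ.strictAnti_mid i u (Fin.lt_def.mpr (by omega))).not_gt
        · exact ⟨s, rfl, Fin.lt_def.mpr (by omega)⟩
      exact .inr (.inl (eq_hub_of_walk_mid hρ hst q ht hle fun z hz hzx =>
        hint z (by simp [hz]) (fun hzt => ht (hzt ▸ hz)) hzx))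

theorem mem_Lset_hub (hl : 2 ≤ l) (hρ : IsAdapted ρ) {i : Fin N} {x : Vert V N l}
    (hx : x ∈ Lset (plusGraph G N l) ρ r (hub i)) :
    x = hub i ∨ ∃ w, x = Sum.inl w ∧ l ≤ r := by
  obtain ⟨hle, p, hp, hlen, hint⟩ := hx
  cases p with
  | nil => exact .inl rfl
  | @cons _ b _ h q =>
    have hi : hub i ∉ q.support := ((Walk.cons_isPath_iff h q).mp hp).2
    obtain ⟨w, s, rfl, -⟩ := eq_mid_of_hub_adj hl h
    have hxC : x ∉ Set.range (mid i w) := by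
      rintro ⟨s', rfl⟩
      exact hle.not_gt (hρ.hub_lt_mid i i w s')
    obtain ⟨z, hzq, rfl | rfl⟩ :=
      q.exists_mem_support_of_mem_of_notMem (fun _ hc _ => adj_mem_range_mid hc) ⟨s, rfl⟩ hxC
    · exact absurd hzq hi
    · obtain rfl : Sum.inl w = x := by
        by_contra hwx
        exact (hint _ (by simp [hzq]) (by simp) hwx).not_gt (hρ.inl_lt_hub w i)
      exact .inr ⟨w, rfl, (le_length_of_walk_hub_inl hl _).trans hlen⟩

theorem hub_notMem_support (hl : 2 ≤ l) {a b : V}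
    (p : (plusGraph G N l).Walk (Sum.inl a) (Sum.inl b)) (hlen : p.length < 2 * l) (i : Fin N) :
    hub i ∉ p.support := by
  classical
  intro hi
  have hsplit := congrArg Walk.length (p.take_spec hi)
  rw [Walk.length_append] at hsplit
  have h₁ := le_length_of_walk_hub_inl hl (p.takeUntil _ hi).reverse
  have h₂ := le_length_of_walk_hub_inl hl (p.dropUntil _ hi)
  rw [Walk.length_reverse] at h₁
  omega

theorem support_subset_range_inl {x y : Vert V N l} (p : (plusGraph G N l).Walk x y)
    (hp : p.IsPath) (hx : x ∈ Set.range Sum.inl) (hy : y ∈ Set.range Sum.inl)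
    (hhub : ∀ i, hub i ∉ p.support) :
    ∀ z ∈ p.support, z ∈ Set.range Sum.inl := by
  induction p with
  | nil => simpa using hx
  | @cons x b y h q ih =>
    obtain ⟨a, rfl⟩ := hx
    have hq := (Walk.cons_isPath_iff h q).mp hp
    rcases b with b | j | ⟨j, w, s⟩
    · simpa using ih hq.1 ⟨b, rfl⟩ hy fun i hi => hhub i (by simp [hi])
    · exact absurd (by simp) (hhub j)
    · exfalso
      obtain rfl : w = a := by
        rcases eq_of_mid_adj h.symm with h' | ⟨h', -⟩ | ⟨_, h', -⟩ <;> simp_all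
      have hyC : y ∉ Set.range (mid j w) := by
        rintro ⟨t, rfl⟩; simp at hy
      obtain ⟨z, hzq, rfl | rfl⟩ :=
        q.exists_mem_support_of_mem_of_notMem (fun _ hc _ => adj_mem_range_mid hc) ⟨s, rfl⟩ hyC
      · exact hhub j (by simp [hzq])
      · exact hq.2 hzq

theorem mem_Lset_of_inl_mem_Lset (hl : 2 ≤ l) (hr : r < 2 * l) {a b : V}
    (hb : Sum.inl b ∈ Lset (plusGraph G N l) ρ r (Sum.inl a)) :
    b ∈ Lset G (ρ ∘ Sum.inl) r a :=
  mem_Lset_comp_of_paths_subset_range inlEmbedding hb fun p hp hlen =>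
    support_subset_range_inl p hp ⟨a, rfl⟩ ⟨b, rfl⟩
      (hub_notMem_support hl p (hlen.trans_lt hr))

theorem Lset_inl_subset_range (hρ : IsAdapted ρ) (a : V) :
    Lset (plusGraph G N l) ρ r (Sum.inl a) ⊆ Set.range Sum.inl := by
  rintro (b | i | ⟨i, w, t⟩) ⟨hle, -⟩
  · exact ⟨b, rfl⟩
  · exact absurd hle (hρ.inl_lt_hub a i).not_ge
  · exact absurd hle (hρ.inl_lt_mid a i w t).not_ge

theorem ncard_Lset_mid_le (hρ : IsAdapted ρ) (i : Fin N) (u : V) (t : Fin (l - 1)) :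
    (Lset (plusGraph G N l) ρ r (mid i u t)).ncard ≤ 3 := by
  classical
  calc _ ≤ (({mid i u t, hub i, next i u t} : Finset (Vert V N l)) : Set (Vert V N l)).ncard :=
        Set.ncard_le_ncard (fun x hx => by simpa using mem_Lset_mid hρ hx) (Finset.finite_toSet _)
    _ ≤ 3 := by rw [Set.ncard_coe_finset]; exact Finset.card_le_three

theorem ncard_Lset_hub_le [Finite V] (hl : 2 ≤ l) (hρ : IsAdapted ρ) (i : Fin N) :
    (Lset (plusGraph G N l) ρ r (hub i)).ncard ≤ Nat.card V + 1 := by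
  calc _ ≤ (insert (hub i) (Set.range Sum.inl) : Set (Vert V N l)).ncard := by
        refine Set.ncard_le_ncard (fun x hx => ?_) (Set.toFinite _)
        rcases mem_Lset_hub hl hρ hx with rfl | ⟨w, rfl, -⟩ <;> simp
    _ ≤ (Set.range Sum.inl : Set (Vert V N l)).ncard + 1 := Set.ncard_insert_le _ _
    _ = Nat.card V + 1 := by rw [Set.ncard_range_of_injective Sum.inl_injective]

theorem ncard_Lset_hub_le_one (hl : 2 ≤ l) (hρ : IsAdapted ρ) (hr : r < l) (i : Fin N) :
    (Lset (plusGraph G N l) ρ r (hub i)).ncard ≤ 1 := by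
  calc _ ≤ ({hub i} : Set (Vert V N l)).ncard := by
        refine Set.ncard_le_ncard (fun x hx => ?_) (Set.finite_singleton _)
        rcases mem_Lset_hub hl hρ hx with rfl | ⟨w, rfl, hlr⟩
        · rfl
        · omega
    _ = 1 := Set.ncard_singleton _

theorem ncard_Lset_inl_le_card [Finite V] (hρ : IsAdapted ρ) (a : V) :
    (Lset (plusGraph G N l) ρ r (Sum.inl a)).ncard ≤ Nat.card V := by
  calc _ ≤ (Set.range Sum.inl : Set (Vert V N l)).ncard :=
        Set.ncard_le_ncard (Lset_inl_subset_range hρ a) (Set.toFinite _)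
    _ = Nat.card V := Set.ncard_range_of_injective Sum.inl_injective

theorem ncard_Lset_inl_le [Finite V] (hl : 2 ≤ l) (hρ : IsAdapted ρ) (hr : r < 2 * l) (a : V) :
    (Lset (plusGraph G N l) ρ r (Sum.inl a)).ncard ≤ (Lset G (ρ ∘ Sum.inl) r a).ncard := by
  calc _ ≤ (Sum.inl '' Lset G (ρ ∘ Sum.inl) r a : Set (Vert V N l)).ncard := by
        refine Set.ncard_le_ncard (fun x hx => ?_) (Set.toFinite _)
        obtain ⟨b, rfl⟩ := Lset_inl_subset_range hρ a hx
        exact ⟨b, mem_Lset_of_inl_mem_Lset hl hr hx, rfl⟩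
    _ = _ := Set.ncard_image_of_injective _ Sum.inl_injective

/-- `Nat.pair` encodes the new vertices injectively; `Fin.rev` makes each path `P_{i,u}` decrease
towards `u`. -/
def extendOrder (ρ : V → ℕ) (M : ℕ) : Vert V N l → ℕ :=
  Sum.elim ρ <| Sum.elim (fun i => M + i) fun z =>
    M + N + Nat.pair (Nat.pair z.1 (ρ z.2.1)) z.2.2.rev

theorem isAdapted_extendOrder {ρ : V → ℕ} {M : ℕ} (hM : ∀ u, ρ u < M) :
    IsAdapted (extendOrder (N := N) (l := l) ρ M) where
  inl_lt_hub u i := by have := hM u; simp [extendOrder]; omega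
  hub_lt_mid i j u t := by simp [extendOrder]; omega
  strictAnti_mid i u s t hst := by
    simpa [extendOrder] using Nat.pair_lt_pair_right _ (Fin.rev_lt_rev.mpr hst)

theorem injective_extendOrder {ρ : V → ℕ} (hρ : Function.Injective ρ) {M : ℕ}
    (hM : ∀ u, ρ u < M) :
    Function.Injective (extendOrder (N := N) (l := l) ρ M) := by
  refine hρ.sumElim (Function.Injective.sumElim ?_ ?_ ?_) ?_
  · intro i j h
    exact Fin.ext (by simpa using h)
  · rintro ⟨i, u, t⟩ ⟨j, w, s⟩ h
    simp only [add_right_inj, Nat.pair_eq_pair, Fin.val_inj, Fin.rev_inj] at h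
    obtain ⟨⟨rfl, huw⟩, rfl⟩ := h
    rw [hρ huw]
  · intro i z
    have := i.isLt
    simp only [ne_eq]
    omega
  · intro u z
    have := hM u
    rcases z with i | z <;> simp <;> omega

end PlusGraph

theorem stmt17_general (f : ℕ → ℝ) (hf3 : ∀ r, 3 ≤ f r)
    (hlim : Filter.Tendsto f Filter.atTop Filter.atTop)
    (V : Type) [Fintype V] (G : SimpleGraph V) (ρ : V → ℕ)
    (hρ : Function.Injective ρ)
    (hcol : ∀ r : ℕ, ∀ v : V, ((Lset G ρ r v).ncard : ℝ) ≤ f r) :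
    ∃ l₀ : ℕ, ∀ N l : ℕ, 0 < N → 0 < l → l₀ ≤ l →
      ∃ ρ' : (V ⊕ (Fin N ⊕ Fin N × V × Fin (l - 1))) → ℕ,
        Function.Injective ρ' ∧
        (∀ u w : V, ρ' (Sum.inl u) < ρ' (Sum.inl w) ↔ ρ u < ρ w) ∧
        ∀ r : ℕ, ∀ v, ((Lset (plusGraph G N l) ρ' r v).ncard : ℝ) ≤ f r := by
  obtain ⟨n₀, hn₀⟩ :=
    Filter.eventually_atTop.mp (hlim.eventually_ge_atTop (Nat.card V + 1 : ℝ))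
  refine ⟨max 2 n₀, fun N l _ _ hl => ?_⟩
  have hl2 : 2 ≤ l := le_of_max_le_left hl
  have hlarge (r : ℕ) (hr : l ≤ r) : (Nat.card V + 1 : ℝ) ≤ f r :=
    hn₀ r ((le_of_max_le_right hl).trans hr)
  have hM (u : V) : ρ u < Finset.univ.sup ρ + 1 := Nat.lt_succ_of_le (Finset.le_sup (by simp))
  have hadapt := PlusGraph.isAdapted_extendOrder (N := N) (l := l) hM
  refine ⟨PlusGraph.extendOrder ρ _, PlusGraph.injective_extendOrder hρ hM, fun _ _ => Iff.rfl,
    fun r v => ?_⟩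
  rcases v with a | i | ⟨i, u, t⟩
  · rcases lt_or_ge r (2 * l) with hr | hr
    · exact (Nat.cast_le.mpr (PlusGraph.ncard_Lset_inl_le hl2 hadapt hr a)).trans (hcol r a)
    · calc _ ≤ (Nat.card V : ℝ) := by exact_mod_cast PlusGraph.ncard_Lset_inl_le_card hadapt a
        _ ≤ f r := by linarith [hlarge r (by omega)]
  · rcases lt_or_ge r l with hr | hr
    · calc _ ≤ (1 : ℝ) := by exact_mod_cast PlusGraph.ncard_Lset_hub_le_one hl2 hadapt hr i
        _ ≤ f r := by linarith [hf3 r]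
    · calc _ ≤ (Nat.card V + 1 : ℝ) := by
            exact_mod_cast PlusGraph.ncard_Lset_hub_le hl2 hadapt i
        _ ≤ f r := hlarge r hr
  · calc _ ≤ (3 : ℝ) := by exact_mod_cast PlusGraph.ncard_Lset_mid_le hadapt i u t
      _ ≤ f r := hf3 r

theorem stmt17 (f : ℕ → ℝ) (hf3 : ∀ r, 3 ≤ f r) (hmono : Monotone f)
    (hlim : Filter.Tendsto f Filter.atTop Filter.atTop)
    (V : Type) [Fintype V] (G : SimpleGraph V) (ρ : V → ℕ)
    (hρ : Function.Injective ρ)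
    (hcol : ∀ r : ℕ, ∀ v : V, ((Lset G ρ r v).ncard : ℝ) ≤ f r) :
    ∃ l₀ : ℕ, ∀ N l : ℕ, 0 < N → 0 < l → l₀ ≤ l →
      ∃ ρ' : (V ⊕ (Fin N ⊕ Fin N × V × Fin (l - 1))) → ℕ,
        Function.Injective ρ' ∧
        (∀ u w : V, ρ' (Sum.inl u) < ρ' (Sum.inl w) ↔ ρ u < ρ w) ∧
        ∀ r : ℕ, ∀ v, ((Lset (plusGraph G N l) ρ' r v).ncard : ℝ) ≤ f r :=
  stmt17_general f hf3 hlim V G ρ hρ hcol
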